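/- arXiv:math/0408354 — 2 statements merged into one kernel-verified Lean document; each statement's English description precedes it below -/
import Mathlib

section
/- For any set S of 2n+1 points in general position in the plane and any two distinct points A, B ∈ S, the number of halving circles of S passing through both A and B is odd. -/
open scoped Classical

noncomputable section

abbrev Pt : Type := EuclideanSpace ℝ (Fin 2)

/-- `p` lies on the circle with center `c` and radius `r`. -/
def onC (c : Pt) (r : ℝ) (p : Pt) : Prop := dist p c = r

/-- `p` lies strictly inside the circle with center `c` and radius `r`. -/
def insideC (c : Pt) (r : ℝ) (p : Pt) : Prop := dist p c < r

/-- `p` lies strictly outside the circle with center `c` and radius `r`. -/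
def outsideC (c : Pt) (r : ℝ) (p : Pt) : Prop := r < dist p c

/-- Four points lie on a common circle. -/
def Concyclic4 (p q u v : Pt) : Prop :=
  ∃ c r, 0 < r ∧ onC c r p ∧ onC c r q ∧ onC c r u ∧ onC c r v

/-- No three points of `S` collinear, no four concyclic. -/
def GenPos (S : Finset Pt) : Prop :=
  (∀ p ∈ S, ∀ q ∈ S, ∀ u ∈ S, p ≠ q → p ≠ u → q ≠ u →
      ¬ Collinear ℝ ({p, q, u} : Set Pt)) ∧
  (∀ p ∈ S, ∀ q ∈ S, ∀ u ∈ S, ∀ v ∈ S,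
      p ≠ q → p ≠ u → p ≠ v → q ≠ u → q ≠ v → u ≠ v → ¬ Concyclic4 p q u v)

/-- The circle `(c, r)` is halving for `S` (with `|S| = 2n+1`). -/
def IsHalving (n : ℕ) (S : Finset Pt) (c : Pt) (r : ℝ) : Prop :=
  0 < r ∧ (S.filter (onC c r)).card = 3 ∧
  (S.filter (insideC c r)).card = n - 1 ∧ (S.filter (outsideC c r)).card = n - 1

/-- The set of halving circles of `S`, encoded as center–radius pairs. -/
def halvingSet (n : ℕ) (S : Finset Pt) : Set (Pt × ℝ) :=
  {cr | IsHalving n S cr.1 cr.2}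

/-- Signed area / cross-product test for which side of line `AB` the point `P` is on. -/
def sideVal (A B P : Pt) : ℝ :=
  (B 0 - A 0) * (P 1 - A 1) - (B 1 - A 1) * (P 0 - A 0)

-- auxiliary geometry
def mkPt (a b : ℝ) : Pt := (EuclideanSpace.equiv (Fin 2) ℝ).symm ![a, b]

lemma ptEq {x y : Pt} (h0 : x 0 = y 0) (h1 : x 1 = y 1) : x = y := by
  apply WithLp.ofLp_injective; funext i; fin_cases i <;> assumption

lemma distSq (x y : Pt) : dist x y ^ 2 = (x 0 - y 0)^2 + (x 1 - y 1)^2 := by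
  rw [EuclideanSpace.dist_eq, Real.sq_sqrt (by positivity)]
  simp [Fin.sum_univ_two, Real.dist_eq, sq_abs]

lemma dist_lt_dist_iff (a b c d : Pt) : dist a b < dist c d ↔ dist a b^2 < dist c d^2 := by
  constructor
  · intro h; exact pow_lt_pow_left₀ h dist_nonneg (by norm_num)
  · intro h; nlinarith [dist_nonneg (x := a) (y := b), dist_nonneg (x := c) (y := d)]

lemma dist_eq_dist_iff (a b c d : Pt) : dist a b = dist c d ↔ dist a b^2 = dist c d^2 := by
  constructor
  · intro h; rw [h]
  · intro h; nlinarith [dist_nonneg (x := a) (y := b), dist_nonneg (x := c) (y := d)]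

def Ef (A B P : Pt) : ℝ :=
  P 0^2 + P 1^2 - A 0^2 - A 1^2 - (A 0 + B 0)*(P 0 - A 0) - (A 1 + B 1)*(P 1 - A 1)

def cen (A B : Pt) (t : ℝ) : Pt :=
  mkPt ((A 0 + B 0)/2 - t*(B 1 - A 1)) ((A 1 + B 1)/2 + t*(B 0 - A 0))

def rad (A B : Pt) (t : ℝ) : ℝ := dist A (cen A B t)

def Ff (A B P : Pt) (t : ℝ) : ℝ := Ef A B P - 2*t*(sideVal A B P)

def tauf (A B P : Pt) : ℝ := Ef A B P / (2 * sideVal A B P)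

lemma cen0 (A B : Pt) (t : ℝ) : cen A B t 0 = (A 0 + B 0)/2 - t*(B 1 - A 1) := rfl
lemma cen1 (A B : Pt) (t : ℝ) : cen A B t 1 = (A 1 + B 1)/2 + t*(B 0 - A 0) := rfl

lemma Fkey (A B P : Pt) (t : ℝ) :
    dist P (cen A B t)^2 - dist A (cen A B t)^2 = Ff A B P t := by
  rw [distSq, distSq, cen0, cen1, Ff, Ef, sideVal]; ring

lemma on_iff (A B P : Pt) (t : ℝ) :
    onC (cen A B t) (rad A B t) P ↔ Ff A B P t = 0 := by
  rw [onC, rad, dist_eq_dist_iff, ← sub_eq_zero, Fkey]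

lemma inside_iff (A B P : Pt) (t : ℝ) :
    insideC (cen A B t) (rad A B t) P ↔ Ff A B P t < 0 := by
  rw [insideC, rad, dist_lt_dist_iff, ← sub_neg, Fkey]

lemma outside_iff (A B P : Pt) (t : ℝ) :
    outsideC (cen A B t) (rad A B t) P ↔ 0 < Ff A B P t := by
  rw [outsideC, rad, dist_lt_dist_iff, ← sub_pos, Fkey]

lemma onA (A B : Pt) (t : ℝ) : onC (cen A B t) (rad A B t) A := rfl

lemma onB (A B : Pt) (t : ℝ) : onC (cen A B t) (rad A B t) B := by
  rw [on_iff, Ff, Ef, sideVal]; ring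

lemma radpos {A B : Pt} (hAB : A ≠ B) (t : ℝ) : 0 < rad A B t := by
  rcases lt_or_eq_of_le (dist_nonneg (x := A) (y := cen A B t)) with h | h
  · exact h
  · exfalso
    have hB := onB A B t
    rw [onC, rad] at hB
    have h1 : A = cen A B t := dist_eq_zero.mp h.symm
    have h2 : B = cen A B t := dist_eq_zero.mp (hB.trans h.symm)
    exact hAB (h1.trans h2.symm)

lemma sv_collinear {A B P : Pt} (hAB : A ≠ B) (h : sideVal A B P = 0) :
    Collinear ℝ ({A, B, P} : Set Pt) := by
  have hd : B 0 - A 0 ≠ 0 ∨ B 1 - A 1 ≠ 0 := by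
    by_contra hc
    push_neg at hc
    exact hAB (ptEq (by linarith [hc.1]) (by linarith [hc.2])).symm
  have hk : ∃ k : ℝ, P = k • (B - A) + A := by
    rw [sideVal] at h
    rcases hd with hd | hd
    · refine ⟨(P 0 - A 0)/(B 0 - A 0), ptEq ?_ ?_⟩
      · show P 0 = (P 0 - A 0)/(B 0 - A 0) * (B 0 - A 0) + A 0
        field_simp
        ring
      · show P 1 = (P 0 - A 0)/(B 0 - A 0) * (B 1 - A 1) + A 1
        field_simp
        linear_combination h
    · refine ⟨(P 1 - A 1)/(B 1 - A 1), ptEq ?_ ?_⟩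
      · show P 0 = (P 1 - A 1)/(B 1 - A 1) * (B 0 - A 0) + A 0
        field_simp
        linear_combination -h
      · show P 1 = (P 1 - A 1)/(B 1 - A 1) * (B 1 - A 1) + A 1
        field_simp
        ring
  obtain ⟨k, hk⟩ := hk
  rw [collinear_iff_exists_forall_eq_smul_vadd]
  refine ⟨A, B - A, ?_⟩
  intro p hp
  rcases hp with rfl | rfl | rfl
  · exact ⟨0, by simp⟩
  · exact ⟨1, by simp⟩
  · exact ⟨k, by simp [hk]⟩

open Finset in
lemma signChanges (b : ℕ → Bool) (m : ℕ) :
    Odd ((Finset.range m).filter (fun i => b i ≠ b (i+1))).card ↔ b 0 ≠ b m := by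
  induction m with
  | zero => simp
  | succ m ih =>
    rw [Finset.range_add_one, Finset.filter_insert]
    by_cases h : b m = b (m+1)
    · rw [if_neg (by simp [h]), ih, ← h]
    · rw [if_pos (by simpa using h), Finset.card_insert_of_notMem (by simp),
        Nat.odd_add_one, Nat.not_odd_iff_even, ← Nat.not_odd_iff_even, ih]
      generalize b 0 = x at *
      generalize b m = y at *
      generalize b (m+1) = z at *
      cases x <;> cases y <;> cases z <;> simp_all

open Finset in
lemma key_comb (n : ℕ) (hn : 1 ≤ n) (T : Finset ℝ) (hT : T.card = 2*n - 1) (σ : ℝ → Bool) :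
    Odd ((T.filter (fun x =>
      (T.filter (fun y => if σ y then y < x else x < y)).card = n - 1)).card) := by
  set m : ℕ := 2*n - 1 with hm
  set e := T.orderIsoOfFin hT with he
  set f : ℕ → ℝ := fun j => if h : j < m then (e ⟨j, h⟩ : ℝ) else 0 with hf
  have hfmem : ∀ j, j < m → f j ∈ T := by
    intro j hj; simp only [hf, dif_pos hj]; exact (e ⟨j, hj⟩).2
  have hfmono : ∀ j k, j < k → k < m → f j < f k := by
    intro j k hjk hk
    simp only [hf, dif_pos hk, dif_pos (hjk.trans hk)]
    exact_mod_cast e.strictMono (by exact_mod_cast hjk)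
  have hfsurj : ∀ y ∈ T, ∃ j, j < m ∧ f j = y := by
    intro y hy
    obtain ⟨j, hj⟩ := e.surjective ⟨y, hy⟩
    exact ⟨j, j.2, by simp [hf, dif_pos j.2, hj]⟩
  have hfinj : ∀ j k, j < m → k < m → f j = f k → j = k := by
    intro j k hj hk hjk
    by_contra hne
    rcases Nat.lt_or_ge j k with h | h
    · exact absurd hjk (ne_of_lt (hfmono _ _ h hk))
    · exact absurd hjk.symm (ne_of_lt (hfmono _ _ (by omega) hj))
  set sb : ℕ → Bool := fun j => σ (f j) with hsb
  set P : ℕ → ℕ := fun i => ((range i).filter (fun j => sb j = true)).card with hP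
  set Q : ℕ → ℕ := fun i => ((range i).filter (fun j => sb j = false)).card with hQ
  set N : ℕ → ℕ := fun i => ((Ico i m).filter (fun j => sb j = false)).card with hN
  have hPQ : ∀ i, P i + Q i = i := by
    intro i
    have h := Finset.card_filter_add_card_filter_not
      (s := range i) (p := fun j => sb j = true)
    simpa [Bool.not_eq_true, Finset.card_range] using h
  have hQN : ∀ i, i ≤ m → Q i + N i = Q m := by
    intro i hi
    have hsplit : range m = range i ∪ Ico i m := by
      simp only [range_eq_Ico]
      exact (Finset.Ico_union_Ico_eq_Ico (Nat.zero_le _) hi).symm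
    have hdisj : Disjoint ((range i).filter (fun j => sb j = false))
        ((Ico i m).filter (fun j => sb j = false)) := by
      simp only [Finset.disjoint_left, Finset.mem_filter, Finset.mem_range, Finset.mem_Ico]
      intro a ha hb; omega
    simp only [hQ, hN, hsplit, Finset.filter_union]
    rw [Finset.card_union_of_disjoint hdisj]
  have hPsucc : ∀ i, P i + (if sb i then 1 else 0) = P (i+1) := by
    intro i
    simp only [hP, Finset.range_add_one, Finset.filter_insert]
    by_cases h : sb i = true
    · rw [if_pos (by simpa using h), if_pos h, Finset.card_insert_of_notMem (by simp)]
    · rw [if_neg (by simpa using h), if_neg h]; simp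
  set cnt : ℝ → ℕ := fun x => (T.filter (fun y => if σ y then y < x else x < y)).card with hcnt
  have hcnti : ∀ i, i < m → cnt (f i) = P i + N (i+1) := by
    intro i hi
    have himg : T.filter (fun y => if σ y then y < f i else f i < y) =
        ((range m).filter (fun j => if sb j then j < i else i < j)).image f := by
      ext y
      simp only [Finset.mem_filter, Finset.mem_image, Finset.mem_range]
      constructor
      · rintro ⟨hyT, hy⟩
        obtain ⟨j, hj, rfl⟩ := hfsurj y hyT
        refine ⟨j, ⟨hj, ?_⟩, rfl⟩
        have hidx : ∀ a b, a < m → b < m → f a < f b → a < b := by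
          intro a b ha hb hab
          by_contra hc
          push_neg at hc
          rcases Nat.eq_or_lt_of_le hc with h | h
          · rw [h] at hab; exact absurd hab (lt_irrefl _)
          · exact lt_asymm (hfmono b a h ha) hab
        by_cases hs : sb j = true
        · rw [if_pos hs]
          rw [if_pos (by simpa [hsb] using hs)] at hy
          exact hidx j i hj hi hy
        · rw [if_neg hs]
          rw [if_neg (by simpa [hsb] using hs)] at hy
          exact hidx i j hi hj hy
      · rintro ⟨j, ⟨hjm, hj⟩, rfl⟩
        refine ⟨hfmem j hjm, ?_⟩
        by_cases hs : sb j = true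
        · rw [if_pos hs] at hj
          rw [if_pos (by simpa [hsb] using hs)]
          exact hfmono j i hj hi
        · rw [if_neg hs] at hj
          rw [if_neg (by simpa [hsb] using hs)]
          exact hfmono i j hj hjm
    have hsplit2 : (range m).filter (fun j => if sb j then j < i else i < j) =
        ((range i).filter (fun j => sb j = true)) ∪ ((Ico (i+1) m).filter (fun j => sb j = false)) := by
      ext j
      simp only [Finset.mem_filter, Finset.mem_range, Finset.mem_union, Finset.mem_Ico]
      by_cases hs : sb j = true <;> simp [hs] <;> omega
    have hdisj2 : Disjoint ((range i).filter (fun j => sb j = true))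
        ((Ico (i+1) m).filter (fun j => sb j = false)) := by
      simp only [Finset.disjoint_left, Finset.mem_filter, Finset.mem_range, Finset.mem_Ico]
      intro a ha hb; omega
    have hinj2 : Set.InjOn f ((range m).filter (fun j => if sb j then j < i else i < j)) := by
      intro a ha b hb hab
      simp only [Finset.coe_filter, Set.mem_setOf_eq, Finset.mem_range] at ha hb
      exact hfinj a b ha.1 hb.1 hab
    rw [hcnt]
    simp only
    rw [himg, Finset.card_image_of_injOn hinj2, hsplit2, Finset.card_union_of_disjoint hdisj2]
  set b : ℕ → Bool := fun i => decide ((0:ℤ) < 4 * P i - 2 * i - (2 * P m - m)) with hb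
  have hcond : ∀ i, i < m → ((cnt (f i) = n - 1) ↔ (b i ≠ b (i+1))) := by
    intro i hi
    rw [hcnti i hi]
    have h1 := hPQ i
    have h2 := hPQ (i+1)
    have h3 := hQN (i+1) hi
    have h4 := hPsucc i
    have h5 := hPQ m
    have hm' : m = 2*n - 1 := hm
    simp only [hb, ne_eq, decide_eq_decide]
    by_cases hs : sb i = true
    · simp only [hs, if_true] at h4; omega
    · rw [Bool.not_eq_true] at hs
      simp only [hs, Bool.false_eq_true, if_false] at h4; omega
  have hb0m : b 0 ≠ b m := by
    have hP0 : P 0 = 0 := by simp [hP]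
    have hm' : m = 2*n - 1 := hm
    simp only [hb, ne_eq, decide_eq_decide, hP0]
    omega
  have hodd := (signChanges b m).mpr hb0m
  have hcount1 : ((range m).filter (fun i => b i ≠ b (i+1))).card =
      ((range m).filter (fun i => cnt (f i) = n - 1)).card := by
    congr 1
    apply Finset.filter_congr
    intro i hi
    simp only [Finset.mem_range] at hi
    simp [hcond i hi]
  have hcount2 : ((range m).filter (fun i => cnt (f i) = n - 1)).card =
      (T.filter (fun x => cnt x = n - 1)).card := by
    apply Finset.card_bij (fun j _ => f j)
    · intro j hj
      simp only [Finset.mem_filter, Finset.mem_range] at hj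
      exact Finset.mem_filter.mpr ⟨hfmem j hj.1, hj.2⟩
    · intro a ha b' hb'
      simp only [Finset.mem_filter, Finset.mem_range] at ha hb'
      exact hfinj a b' ha.1 hb'.1
    · intro y hy
      simp only [Finset.mem_filter] at hy
      obtain ⟨j, hj, rfl⟩ := hfsurj y hy.1
      exact ⟨j, Finset.mem_filter.mpr ⟨Finset.mem_range.mpr hj, hy.2⟩, rfl⟩
  rw [hcount1, hcount2] at hodd
  exact hodd

open Finset in
lemma key_comb' (n : ℕ) (hn : 1 ≤ n) (R : Finset Pt) (hR : R.card = 2*n - 1)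
    (τ : Pt → ℝ) (hτ : ∀ p ∈ R, ∀ q ∈ R, τ p = τ q → p = q) (σ : Pt → Bool) :
    Odd ((R.filter (fun P =>
      (R.filter (fun Q => if σ Q then τ Q < τ P else τ P < τ Q)).card = n - 1)).card) := by
  set T : Finset ℝ := R.image τ with hTdef
  have hT : T.card = 2*n - 1 := by
    rw [hTdef, Finset.card_image_of_injOn (fun p hp q hq => hτ p hp q hq), hR]
  set σ' : ℝ → Bool := fun y => if h : ∃ P, P ∈ R ∧ τ P = y then σ h.choose else false with hσ'def
  have hσ' : ∀ P ∈ R, σ' (τ P) = σ P := by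
    intro P hP
    have hex : ∃ Q, Q ∈ R ∧ τ Q = τ P := ⟨P, hP, rfl⟩
    have hch := hex.choose_spec
    have : hex.choose = P := hτ _ hch.1 _ hP hch.2
    simp only [hσ'def, dif_pos hex, this]
  have hinner : ∀ P ∈ R, (R.filter (fun Q => if σ Q then τ Q < τ P else τ P < τ Q)).card
      = (T.filter (fun y => if σ' y then y < τ P else τ P < y)).card := by
    intro P hP
    apply Finset.card_bij (fun Q _ => τ Q)
    · intro Q hQ
      rw [Finset.mem_filter] at hQ ⊢
      refine ⟨Finset.mem_image_of_mem τ hQ.1, ?_⟩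
      rw [hσ' Q hQ.1]
      exact hQ.2
    · intro a ha b hb hab
      rw [Finset.mem_filter] at ha hb
      exact hτ a ha.1 b hb.1 hab
    · intro y hy
      rw [Finset.mem_filter] at hy
      obtain ⟨Q, hQ, rfl⟩ := Finset.mem_image.mp hy.1
      refine ⟨Q, Finset.mem_filter.mpr ⟨hQ, ?_⟩, rfl⟩
      rw [← hσ' Q hQ]
      exact hy.2
  have houter : (R.filter (fun P =>
      (R.filter (fun Q => if σ Q then τ Q < τ P else τ P < τ Q)).card = n - 1)).card
      = (T.filter (fun x =>
      (T.filter (fun y => if σ' y then y < x else x < y)).card = n - 1)).card := by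
    apply Finset.card_bij (fun P _ => τ P)
    · intro P hP
      rw [Finset.mem_filter] at hP ⊢
      refine ⟨Finset.mem_image_of_mem τ hP.1, ?_⟩
      rw [← hinner P hP.1]
      exact hP.2
    · intro a ha b hb hab
      rw [Finset.mem_filter] at ha hb
      exact hτ a ha.1 b hb.1 hab
    · intro y hy
      rw [Finset.mem_filter] at hy
      obtain ⟨P, hP, rfl⟩ := Finset.mem_image.mp hy.1
      refine ⟨P, Finset.mem_filter.mpr ⟨hP, ?_⟩, rfl⟩
      rw [hinner P hP]
      exact hy.2
  rw [houter]
  exact key_comb n hn T hT σ'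

/-- The number of halving circles through two fixed points of `S` is odd. -/
theorem odd_halving_circles_through_pair (n : ℕ) (hn : 1 ≤ n) (S : Finset Pt)
    (hcard : S.card = 2 * n + 1) (hgen : GenPos S)
    (A B : Pt) (hA : A ∈ S) (hB : B ∈ S) (hAB : A ≠ B) :
    Odd ({cr : Pt × ℝ | IsHalving n S cr.1 cr.2 ∧ onC cr.1 cr.2 A ∧
      onC cr.1 cr.2 B}.ncard) := by
  set R : Finset Pt := (S.erase A).erase B with hRdef
  have hmemR : ∀ Q, Q ∈ R ↔ Q ∈ S ∧ Q ≠ A ∧ Q ≠ B := by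
    intro Q; simp only [hRdef, Finset.mem_erase]; tauto
  have hRcard : R.card = 2*n - 1 := by
    rw [hRdef, Finset.card_erase_of_mem (Finset.mem_erase.mpr ⟨hAB.symm, hB⟩),
      Finset.card_erase_of_mem hA, hcard]
    omega
  have hd : B 0 - A 0 ≠ 0 ∨ B 1 - A 1 ≠ 0 := by
    by_contra hc
    push_neg at hc
    exact hAB (ptEq (by linarith [hc.1]) (by linarith [hc.2])).symm
  have hsv : ∀ P ∈ R, sideVal A B P ≠ 0 := by
    intro P hP hzero
    rw [hmemR] at hP
    exact hgen.1 A hA B hB P hP.1 hAB (Ne.symm hP.2.1) (Ne.symm hP.2.2)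
      (sv_collinear hAB hzero)
  have hFt : ∀ P, sideVal A B P ≠ 0 → ∀ t, Ff A B P t
      = 2 * sideVal A B P * (tauf A B P - t) := by
    intro P hsvP t
    rw [Ff, tauf]
    field_simp
  set τ : Pt → ℝ := tauf A B with hτdef
  have hτ : ∀ p ∈ R, ∀ q ∈ R, τ p = τ q → p = q := by
    intro p hp q hq heq
    by_contra hne
    apply hgen.2 A hA B hB p ((hmemR p).mp hp).1 q ((hmemR q).mp hq).1 hAB
      (Ne.symm ((hmemR p).mp hp).2.1) (Ne.symm ((hmemR q).mp hq).2.1)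
      (Ne.symm ((hmemR p).mp hp).2.2) (Ne.symm ((hmemR q).mp hq).2.2) hne
    refine ⟨cen A B (τ p), rad A B (τ p), radpos hAB _, onA A B _, onB A B _, ?_, ?_⟩
    · rw [on_iff, hFt p (hsv p hp)]; ring
    · rw [on_iff, hFt q (hsv q hq), ← heq]; ring
  set σ : Pt → Bool := fun P => decide (0 < sideVal A B P) with hσdef
  have hIn : ∀ P ∈ R, ∀ Q ∈ R, (insideC (cen A B (τ P)) (rad A B (τ P)) Q ↔
      (if σ Q then τ Q < τ P else τ P < τ Q)) := by
    intro P hP Q hQ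
    rw [inside_iff, hFt Q (hsv Q hQ)]
    have hsQ := hsv Q hQ
    by_cases h : 0 < sideVal A B Q
    · simp only [hσdef, decide_eq_true_eq]
      rw [if_pos h]
      constructor
      · intro h2; nlinarith
      · intro h2; nlinarith
    · have h' : sideVal A B Q < 0 := lt_of_le_of_ne (not_lt.mp h) hsQ
      simp only [hσdef, decide_eq_true_eq]
      rw [if_neg h]
      constructor
      · intro h2; nlinarith
      · intro h2; nlinarith
  have honSet : ∀ P ∈ R, S.filter (onC (cen A B (τ P)) (rad A B (τ P))) = {A, B, P} := by
    intro P hP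
    ext Q
    simp only [Finset.mem_filter, Finset.mem_insert, Finset.mem_singleton]
    constructor
    · rintro ⟨hQS, hQon⟩
      by_contra hc
      push_neg at hc
      obtain ⟨h1, h2, h3⟩ := hc
      have hQR : Q ∈ R := (hmemR Q).mpr ⟨hQS, h1, h2⟩
      rw [on_iff, hFt Q (hsv Q hQR)] at hQon
      have : τ Q = τ P := by
        rcases mul_eq_zero.mp hQon with h | h
        · exact absurd (by linarith : sideVal A B Q = 0) (hsv Q hQR)
        · have := sub_eq_zero.mp h; simp only [hτdef]; linarith
      exact h3 (hτ Q hQR P hP this)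
    · intro h
      rcases h with h | h | h
      · rw [h]; exact ⟨hA, onA A B _⟩
      · rw [h]; exact ⟨hB, onB A B _⟩
      · rw [h]
        refine ⟨((hmemR P).mp hP).1, ?_⟩
        rw [on_iff, hFt P (hsv P hP)]
        ring
  have hInSet : ∀ P ∈ R, S.filter (insideC (cen A B (τ P)) (rad A B (τ P))) =
      R.filter (fun Q => if σ Q then τ Q < τ P else τ P < τ Q) := by
    intro P hP
    ext Q
    simp only [Finset.mem_filter]
    constructor
    · rintro ⟨hQS, hQin⟩
      have hQR : Q ∈ R := by
        rw [hmemR]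
        refine ⟨hQS, ?_, ?_⟩
        · intro h
          rw [h] at hQin
          exact lt_irrefl _ hQin
        · intro h
          rw [h] at hQin
          have hon := onB A B (τ P)
          rw [onC] at hon
          rw [insideC, hon] at hQin
          exact lt_irrefl _ hQin
      exact ⟨hQR, (hIn P hP Q hQR).mp hQin⟩
    · rintro ⟨hQR, hcond⟩
      exact ⟨((hmemR Q).mp hQR).1, (hIn P hP Q hQR).mpr hcond⟩
  have hpart : ∀ c r, (S.filter (onC c r)).card + (S.filter (insideC c r)).card
      + (S.filter (outsideC c r)).card = S.card := by
    intro c r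
    have h1 : S.filter (insideC c r) ∪ S.filter (outsideC c r)
        = S.filter (fun q => ¬ onC c r q) := by
      ext q
      simp only [Finset.mem_union, Finset.mem_filter]
      simp only [insideC, outsideC, onC]
      constructor
      · rintro (⟨hq, h⟩ | ⟨hq, h⟩)
        · exact ⟨hq, ne_of_lt h⟩
        · exact ⟨hq, ne_of_gt h⟩
      · rintro ⟨hq, h⟩
        rcases lt_or_gt_of_ne h with h' | h'
        · exact Or.inl ⟨hq, h'⟩
        · exact Or.inr ⟨hq, h'⟩
    have h2 : Disjoint (S.filter (insideC c r)) (S.filter (outsideC c r)) := by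
      simp only [Finset.disjoint_left, Finset.mem_filter, insideC, outsideC]
      rintro q ⟨hq, h⟩ ⟨hq', h'⟩
      linarith
    have h3 := Finset.card_filter_add_card_filter_not (s := S) (p := onC c r)
    rw [Nat.add_assoc, ← Finset.card_union_of_disjoint h2, h1]
    exact h3
  have hc3 : ∀ P ∈ R, ({A, B, P} : Finset Pt).card = 3 := by
    intro P hP
    obtain ⟨_, hPA, hPB⟩ := (hmemR P).mp hP
    rw [Finset.card_insert_of_notMem (by simp [hAB, Ne.symm hPA]),
      Finset.card_insert_of_notMem (by simp [Ne.symm hPB]), Finset.card_singleton]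
  have hgood : ∀ P ∈ R,
      ((R.filter (fun Q => if σ Q then τ Q < τ P else τ P < τ Q)).card = n - 1) →
      IsHalving n S (cen A B (τ P)) (rad A B (τ P)) := by
    intro P hP hcnt
    refine ⟨radpos hAB _, ?_, ?_, ?_⟩
    · rw [honSet P hP]; exact hc3 P hP
    · rw [hInSet P hP]; exact hcnt
    · have hpp := hpart (cen A B (τ P)) (rad A B (τ P))
      rw [honSet P hP, hInSet P hP, hcnt, hcard, hc3 P hP] at hpp
      omega
  set F : Pt → Pt × ℝ := fun P => (cen A B (τ P), rad A B (τ P)) with hFdef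
  set G : Finset Pt := R.filter (fun P =>
    (R.filter (fun Q => if σ Q then τ Q < τ P else τ P < τ Q)).card = n - 1) with hGdef
  have hset : {cr : Pt × ℝ | IsHalving n S cr.1 cr.2 ∧ onC cr.1 cr.2 A ∧ onC cr.1 cr.2 B}
      = F '' ↑G := by
    ext ⟨c, r⟩
    simp only [Set.mem_setOf_eq, Set.mem_image, Finset.mem_coe]
    constructor
    · rintro ⟨⟨hr, hon3, hinn, hout⟩, hAon, hBon⟩
      have hAc : dist A c = r := hAon
      have hBc : dist B c = r := hBon
      have hACBC : (A 0 - c 0)^2 + (A 1 - c 1)^2 = (B 0 - c 0)^2 + (B 1 - c 1)^2 := by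
        have : dist A c ^ 2 = dist B c ^2 := by rw [hAc, hBc]
        rw [distSq, distSq] at this
        exact this
      have hDpos : (0:ℝ) < (B 0 - A 0)^2 + (B 1 - A 1)^2 := by
        rcases hd with h | h
        · have := sq_nonneg (B 1 - A 1); have h2 : 0 < (B 0 - A 0)^2 := by positivity
          linarith
        · have := sq_nonneg (B 0 - A 0); have h2 : 0 < (B 1 - A 1)^2 := by positivity
          linarith
      set t : ℝ := ((B 0 - A 0)*(c 1 - (A 1 + B 1)/2) - (B 1 - A 1)*(c 0 - (A 0 + B 0)/2))
        / ((B 0 - A 0)^2 + (B 1 - A 1)^2) with htdef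
      have hlin : (B 0 - A 0)*(c 0 - (A 0 + B 0)/2) + (B 1 - A 1)*(c 1 - (A 1 + B 1)/2) = 0 := by
        linear_combination (1/2) * hACBC
      have hDne : ((B 0 - A 0)^2 + (B 1 - A 1)^2) ≠ 0 := ne_of_gt hDpos
      have ht' : t * ((B 0 - A 0)^2 + (B 1 - A 1)^2)
          = (B 0 - A 0)*(c 1 - (A 1 + B 1)/2) - (B 1 - A 1)*(c 0 - (A 0 + B 0)/2) := by
        rw [htdef]
        exact div_mul_cancel₀ _ hDne
      clear_value t
      have hcc : c = cen A B t := by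
        apply ptEq
        · rw [cen0]
          apply mul_right_cancel₀ hDne
          linear_combination (B 1 - A 1) * ht' + (B 0 - A 0) * hlin
        · rw [cen1]
          apply mul_right_cancel₀ hDne
          linear_combination (-(B 0 - A 0)) * ht' + (B 1 - A 1) * hlin
      have hrad : r = rad A B t := by rw [← hAc, hcc]; rfl
      have hsub : ({A, B} : Finset Pt) ⊆ S.filter (onC c r) := by
        intro q hq
        simp only [Finset.mem_insert, Finset.mem_singleton] at hq
        rcases hq with h | h <;> rw [h]
        · exact Finset.mem_filter.mpr ⟨hA, hAon⟩
        · exact Finset.mem_filter.mpr ⟨hB, hBon⟩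
      have hcard1 : ((S.filter (onC c r)) \ {A, B}).card = 1 := by
        rw [Finset.card_sdiff_of_subset hsub, hon3,
          Finset.card_insert_of_notMem (by simp [hAB]), Finset.card_singleton]
      obtain ⟨P, hPeq⟩ := Finset.card_eq_one.mp hcard1
      have hPm : P ∈ S.filter (onC c r) \ ({A, B} : Finset Pt) := by
        rw [hPeq]; exact Finset.mem_singleton_self P
      rw [Finset.mem_sdiff, Finset.mem_filter] at hPm
      have hPnotAB : P ≠ A ∧ P ≠ B := by
        have := hPm.2
        simp only [Finset.mem_insert, Finset.mem_singleton] at this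
        tauto
      have hPR : P ∈ R := (hmemR P).mpr ⟨hPm.1.1, hPnotAB.1, hPnotAB.2⟩
      have hPon : onC c r P := hPm.1.2
      have ht : t = τ P := by
        rw [hcc, hrad] at hPon
        rw [on_iff, hFt P (hsv P hPR)] at hPon
        rcases mul_eq_zero.mp hPon with h | h
        · exact absurd (by linarith) (hsv P hPR)
        · have := sub_eq_zero.mp h
          simp only [hτdef]; linarith
      refine ⟨P, ?_, ?_⟩
      · rw [hGdef, Finset.mem_filter]
        refine ⟨hPR, ?_⟩
        rw [hcc, ht] at hinn
        rw [hrad, ht] at hinn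
        rw [hInSet P hPR] at hinn
        exact hinn
      · rw [hFdef]
        rw [hcc, hrad, ht]
    · rintro ⟨P, hPG, heq⟩
      rw [hGdef, Finset.mem_filter] at hPG
      have hc' : c = cen A B (τ P) := (congrArg Prod.fst heq).symm
      have hr' : r = rad A B (τ P) := (congrArg Prod.snd heq).symm
      rw [hc', hr']
      exact ⟨hgood P hPG.1 hPG.2, onA A B _, onB A B _⟩
  rw [hset, Set.ncard_image_of_injOn, Set.ncard_coe_finset]
  · rw [hGdef]
    exact key_comb' n hn R hRcard τ hτ σ
  · intro p hp q hq heq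
    simp only [Finset.mem_coe, hGdef, Finset.mem_filter] at hp hq
    have h1 : cen A B (τ p) = cen A B (τ q) := congrArg Prod.fst heq
    have h10 := congrArg (fun (x : Pt) => x 0) h1
    have h11 := congrArg (fun (x : Pt) => x 1) h1
    simp only [cen0, cen1] at h10 h11
    have ht : τ p = τ q := by
      rcases hd with h | h
      · have : τ p * (B 0 - A 0) = τ q * (B 0 - A 0) := by linarith
        exact mul_right_cancel₀ h this
      · have : τ p * (B 1 - A 1) = τ q * (B 1 - A 1) := by linarith
        exact mul_right_cancel₀ h this
    exact hτ p hp.1 q hq.1 ht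
end
end

section
/- Let P, X, Y, Q be points in the plane with P, X, Y not collinear, and suppose Q lies strictly outside the circumcircle of P, X, Y. Then P lies strictly inside the circumcircle of Q, X, Y if and only if P and Q lie on the same side of line XY. -/
open scoped Classical

noncomputable section

lemma dist_sq_pt (p q : Pt) :
    dist p q ^ 2 = (p 0 - q 0) ^ 2 + (p 1 - q 1) ^ 2 := by
  rw [EuclideanSpace.dist_eq, Real.sq_sqrt (by positivity)]
  simp [Fin.sum_univ_two, Real.dist_eq, sq_abs]

lemma collinear_of_sideVal_eq_zero (A B C : Pt) (h : sideVal A B C = 0) :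
    Collinear ℝ ({C, A, B} : Set Pt) := by
  by_cases hAB : A = B
  · subst hAB
    refine Collinear.subset ?_ (collinear_pair ℝ C A)
    intro x hx
    simp only [Set.mem_insert_iff, Set.mem_singleton_iff] at hx ⊢
    tauto
  · have hne : B 0 ≠ A 0 ∨ B 1 ≠ A 1 := by
      by_contra hcon
      push_neg at hcon
      apply hAB
      ext i
      fin_cases i
      · exact hcon.1.symm
      · exact hcon.2.symm
    rw [collinear_iff_of_mem (show A ∈ ({C, A, B} : Set Pt) by simp)]
    refine ⟨B - A, ?_⟩
    intro p hp
    simp only [Set.mem_insert_iff, Set.mem_singleton_iff] at hp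
    unfold sideVal at h
    rcases hp with rfl | rfl | rfl
    · rcases hne with h0 | h1
      · refine ⟨(p 0 - A 0) / (B 0 - A 0), ?_⟩
        have hd : B 0 - A 0 ≠ 0 := sub_ne_zero.mpr h0
        ext i
        fin_cases i <;>
          simp only [PiLp.add_apply, PiLp.smul_apply, PiLp.sub_apply, vadd_eq_add,
            smul_eq_mul, Fin.zero_eta, Fin.mk_one] <;> field_simp <;> ring_nf <;> nlinarith [h]
      · refine ⟨(p 1 - A 1) / (B 1 - A 1), ?_⟩
        have hd : B 1 - A 1 ≠ 0 := sub_ne_zero.mpr h1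
        ext i
        fin_cases i <;>
          simp only [PiLp.add_apply, PiLp.smul_apply, PiLp.sub_apply, vadd_eq_add,
            smul_eq_mul, Fin.zero_eta, Fin.mk_one] <;> field_simp <;> ring_nf <;> nlinarith [h]
    · exact ⟨0, by simp⟩
    · refine ⟨1, ?_⟩
      ext i
      fin_cases i <;>
        simp only [PiLp.add_apply, PiLp.smul_apply, PiLp.sub_apply, vadd_eq_add,
          one_smul] <;> ring

set_option maxHeartbeats 1600000 in
/-- If `Q` is strictly outside circle `PXY`, then `P` is strictly inside circle
`QXY` iff `P` and `Q` lie on the same side of line `XY`. -/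
theorem inside_circle_iff_same_side (P X Y Q : Pt)
    (hPXY : ¬ Collinear ℝ ({P, X, Y} : Set Pt))
    (hQXY : ¬ Collinear ℝ ({Q, X, Y} : Set Pt))
    (c₁ : Pt) (r₁ : ℝ) (hr₁ : 0 < r₁)
    (hc₁ : onC c₁ r₁ P ∧ onC c₁ r₁ X ∧ onC c₁ r₁ Y)
    (hQout : outsideC c₁ r₁ Q)
    (c₂ : Pt) (r₂ : ℝ) (hr₂ : 0 < r₂)
    (hc₂ : onC c₂ r₂ Q ∧ onC c₂ r₂ X ∧ onC c₂ r₂ Y) :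
    insideC c₂ r₂ P ↔ 0 < sideVal X Y P * sideVal X Y Q := by
  obtain ⟨hP1, hX1, hY1⟩ := hc₁
  obtain ⟨hQ2, hX2, hY2⟩ := hc₂
  have e1 : (P 0 - c₁ 0) ^ 2 + (P 1 - c₁ 1) ^ 2 = r₁ ^ 2 := by
    rw [← dist_sq_pt, hP1]
  have e2 : (X 0 - c₁ 0) ^ 2 + (X 1 - c₁ 1) ^ 2 = r₁ ^ 2 := by
    rw [← dist_sq_pt, hX1]
  have e3 : (Y 0 - c₁ 0) ^ 2 + (Y 1 - c₁ 1) ^ 2 = r₁ ^ 2 := by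
    rw [← dist_sq_pt, hY1]
  have e4 : (Q 0 - c₂ 0) ^ 2 + (Q 1 - c₂ 1) ^ 2 = r₂ ^ 2 := by
    rw [← dist_sq_pt, hQ2]
  have e5 : (X 0 - c₂ 0) ^ 2 + (X 1 - c₂ 1) ^ 2 = r₂ ^ 2 := by
    rw [← dist_sq_pt, hX2]
  have e6 : (Y 0 - c₂ 0) ^ 2 + (Y 1 - c₂ 1) ^ 2 = r₂ ^ 2 := by
    rw [← dist_sq_pt, hY2]
  have hQsq : r₁ ^ 2 < (Q 0 - c₁ 0) ^ 2 + (Q 1 - c₁ 1) ^ 2 := by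
    have hQd : r₁ < dist Q c₁ := hQout
    rw [← dist_sq_pt]
    nlinarith [hQd, hr₁, dist_nonneg (x := Q) (y := c₁)]
  obtain ⟨sP, hsPdef⟩ : ∃ x, x = sideVal X Y P := ⟨_, rfl⟩
  obtain ⟨sQ, hsQdef⟩ : ∃ x, x = sideVal X Y Q := ⟨_, rfl⟩
  rw [← hsPdef, ← hsQdef]
  have hsQ : sQ ≠ 0 := fun h => hQXY (collinear_of_sideVal_eq_zero X Y Q (hsQdef ▸ h))
  obtain ⟨fP, hfPdef⟩ : ∃ x, x = (P 0 - c₂ 0) ^ 2 + (P 1 - c₂ 1) ^ 2 - r₂ ^ 2 := ⟨_, rfl⟩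
  obtain ⟨fQ, hfQdef⟩ : ∃ x, x = r₁ ^ 2 - ((Q 0 - c₁ 0) ^ 2 + (Q 1 - c₁ 1) ^ 2) := ⟨_, rfl⟩
  have hfQ : fQ < 0 := by rw [hfQdef]; linarith
  have key : fP * sQ = fQ * sP := by
    rw [hfPdef, hfQdef, hsPdef, hsQdef]
    unfold sideVal
    linear_combination
      ((Y 0 - X 0) * (Q 1 - X 1) - (Y 1 - X 1) * (Q 0 - X 0)) * e1 +
      ((Y 0 - X 0) * (P 1 - X 1) - (Y 1 - X 1) * (P 0 - X 0)) * e4 +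
      (((Y 0 - X 0) * (Q 1 - X 1) - (Y 1 - X 1) * (Q 0 - X 0)) -
       ((Y 0 - X 0) * (P 1 - X 1) - (Y 1 - X 1) * (P 0 - X 0)) -
       ((P 0 - X 0) * (Q 1 - X 1) - (P 1 - X 1) * (Q 0 - X 0))) * (e5 - e2) +
      ((P 0 - X 0) * (Q 1 - X 1) - (P 1 - X 1) * (Q 0 - X 0)) * (e6 - e3)
  have hsQ2 : (0 : ℝ) < sQ ^ 2 := by positivity
  have h1 : fQ * (sP * sQ) = fP * sQ ^ 2 := by linear_combination (-sQ) * key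
  have hd : dist P c₂ ^ 2 = fP + r₂ ^ 2 := by rw [dist_sq_pt, hfPdef]; ring
  constructor
  · intro h
    have hdd : dist P c₂ < r₂ := h
    have hlt : dist P c₂ ^ 2 < r₂ ^ 2 := by
      nlinarith [dist_nonneg (x := P) (y := c₂), hdd, hr₂]
    have hfP : fP < 0 := by linarith [hd ▸ hlt]
    by_contra hc
    push_neg at hc
    nlinarith [h1, mul_neg_of_neg_of_pos hfP hsQ2,
      mul_nonneg (neg_nonneg.mpr hfQ.le) (neg_nonneg.mpr hc)]
  · intro h
    have h2 : fQ * (sP * sQ) < 0 := mul_neg_of_neg_of_pos hfQ h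
    have hfP : fP < 0 := by nlinarith
    have hlt : dist P c₂ ^ 2 < r₂ ^ 2 := by rw [hd]; linarith
    show dist P c₂ < r₂
    nlinarith [dist_nonneg (x := P) (y := c₂), hr₂, hlt]
end
end
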